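/- Suppose (Λ_n) satisfies Condition (D^Λ) and fix j ≤ q; set l_0 := j and z_{l_0} := 0. Then: (a) if i ∈ {0,1,…,b_j} satisfies (TIP_j), then 𝓛_{l_i} = 𝓛_j and λ_{l_i} = λ_j; (b) if 𝓛_j is a full-rank lattice of ℤ^k then every i ∈ {0,…,b_j} satisfies (TIP_j); (c) if D_j is bounded then no i ∈ {0,…,b_j} satisfies (TIP_j); (d) for every i ∈ W_j one has D̂_{l_i} = D̂_j; and (e) the set D̂_j ∪ {0} ∪ (−D̂_j) is invariant under translation by every point of 𝓛_j. -/

import Mathlib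

/-!
Everything rests on a dichotomy for a shift `z ∈ D_j` whose shifted set `B = ((D_j)_{-z})⁺` is
periodic along some `g ≻ 0` of `𝓖(B)`. Either for every box `K_R` some multiple `a • g` with
`1 ≤ a ≤ p` is a period of `D_j` on `K_R`, and then `z - g ∈ D_j` has the same shifted set `B`;
or for some `R` none is, and then for each `t ∈ Λ_n` whose window (on a large box) is `D_j`, the
points `t + z + i • g`, `i ≤ p`, are distinct points of `Λ_n`, whence `λ_j (p + 1) ≤ 1`. Since
`λ_j > 0`, the first alternative holds for `p` large.

So under `(TIP_j)` the shift `z_{l_i}` can be replaced by a shift `x ∈ D_j` with `x ≺ y` for some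
`y ∈ 𝓖_j`, and the shift by `y - x ∈ D_{l_i}` leads back to `D_j`. Shifting only enlarges `𝓖`,
so `𝓖_{l_i} = 𝓖_j`; comparing window densities along the two shifts gives `λ_{l_i} = λ_j`, and
the two shifts carry the (TIP) shifts of one set to those of the other, so `D̂_{l_i} = D̂_j`.
For (b), a full-rank `𝓛_j` contains a positive multiple of every vector; for (c), a nonzero
`g ∈ 𝓖_j` would put all `n • g` into the bounded set `D_j`.
-/

open scoped Classical Pointwise
open Filter Set

namespace Paper

/-- The index space `ℤ^k`. -/
abbrev V (k : ℕ) := Fin k → ℤ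

variable {k : ℕ}

/-- Translate of a set: `(A)_t = {a + t : a ∈ A}`. -/
def tr (A : Set (V k)) (t : V k) : Set (V k) := (fun a => a + t) '' A

/-- Positive part of a set with respect to the order `prec`: `A⁺ = {a ∈ A : 0 ≺ a}`. -/
def posPart (prec : V k → V k → Prop) (A : Set (V k)) : Set (V k) := {a ∈ A | prec 0 a}

/-- The hypercube `K_c = ([-c,c] ∩ ℤ)^k`. -/
def Kc (k c : ℕ) : Set (V k) := {t : V k | ∀ i, |t i| ≤ (c : ℤ)}

/-- `Λ^{(t,c)} = ((Λ)_{-t} ∩ K_c)⁺`. -/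
def window (prec : V k → V k → Prop) (Λ : Set (V k)) (t : V k) (c : ℕ) : Set (V k) :=
  posPart prec (tr Λ (-t) ∩ Kc k c)

/-- A translation-invariant total (strict) order on `ℤ^k`. -/
structure IsTransOrder (prec : V k → V k → Prop) : Prop where
  trans : ∀ {a b c : V k}, prec a b → prec b c → prec a c
  irrefl : ∀ a : V k, ¬ prec a a
  total : ∀ a b : V k, a ≠ b → prec a b ∨ prec b a
  invariant : ∀ a b i : V k, prec a b → prec (a + i) (b + i)

/-- Condition `(D^Λ)`: the index sets `Λ_n`, the asymptotic sets `D_1, …, D_q`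
(`q ∈ ℕ ∪ {∞}`, indexed by `i : ℕ` with `(i : ℕ∞) < q`), and the weights. -/
structure CondD (k : ℕ) where
  prec : V k → V k → Prop
  ord : IsTransOrder prec
  Lam : ℕ → Finset (V k)
  card_top : Tendsto (fun n => (Lam n).card) atTop atTop
  q : ℕ∞
  D : ℕ → Set (V k)
  D_subset : ∀ i : ℕ, (i : ℕ∞) < q → D i ⊆ {t : V k | prec 0 t}
  D_ne : ∀ i j : ℕ, (i : ℕ∞) < q → (j : ℕ∞) < q → i ≠ j → D i ≠ D j
  lamP : ℕ → ℕ → ℝ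
  lam : ℕ → ℝ
  tendsto_lamP : ∀ i p : ℕ, (i : ℕ∞) < q →
    Tendsto (fun n =>
        (((Lam n).filter fun t => window prec (Lam n : Set (V k)) t p = D i ∩ Kc k p).card : ℝ) /
          ((Lam n).card : ℝ))
      atTop (nhds (lamP i p))
  tendsto_lam : ∀ i : ℕ, (i : ℕ∞) < q → Tendsto (fun p => lamP i p) atTop (nhds (lam i))
  lam_pos : ∀ i : ℕ, (i : ℕ∞) < q → 0 < lam i
  lam_sum : ∑' i : {i : ℕ // (i : ℕ∞) < q}, lam i.1 = 1

/-- `((A)_{-z})⁺`, the shifted positive part of `A`. -/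
def shiftPos (prec : V k → V k → Prop) (A : Set (V k)) (z : V k) : Set (V k) :=
  posPart prec (tr A (-z))

/-- `𝓖(A) = {z ∈ A ∪ {0} : ((A)_{-z})⁺ = A}`. -/
def Gset (prec : V k → V k → Prop) (A : Set (V k)) : Set (V k) :=
  {z ∈ insert (0 : V k) A | shiftPos prec A z = A}

/-- `𝓛(A) = 𝓖(A) ∪ (-𝓖(A))`. -/
def Lset (prec : V k → V k → Prop) (A : Set (V k)) : Set (V k) :=
  Gset prec A ∪ (-(Gset prec A))

/-- The rank (as a free abelian group) of the subgroup of `ℤ^k` generated by `S`. -/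
noncomputable def latticeRank (S : Set (V k)) : ℕ :=
  Module.finrank ℤ ↥(AddSubgroup.toIntSubmodule (AddSubgroup.closure S))

/-- The Translation Invariance Property of the shift `z` of the set `A`: some point of
`((𝓛(((A)_{-z})⁺))_z)⁺` precedes some point of `𝓖(A)`. -/
def TIPat (prec : V k → V k → Prop) (A : Set (V k)) (z : V k) : Prop :=
  ∃ x ∈ posPart prec (tr (Lset prec (shiftPos prec A z)) z), ∃ y ∈ Gset prec A, prec x y

/-- `D̂(A) = ⋃_{h ∈ W} D_{l_h}`: the union of the shifted sets `((A)_{-z})⁺`, over the shifts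
`z ∈ A ∪ {0}` satisfying the Translation Invariance Property. -/
def Dhat (prec : V k → V k → Prop) (A : Set (V k)) : Set (V k) :=
  ⋃ z ∈ {z ∈ insert (0 : V k) A | TIPat prec A z}, shiftPos prec A z

namespace IsTransOrder

variable {prec : V k → V k → Prop}

theorem add_lt_add (ho : IsTransOrder prec) {a b c d : V k} (hab : prec a b) (hcd : prec c d) :
    prec (a + c) (b + d) := by
  refine ho.trans (ho.invariant a b c hab) ?_
  simpa only [add_comm _ b] using ho.invariant c d b hcd

theorem add_pos (ho : IsTransOrder prec) {a b : V k} (ha : prec 0 a) (hb : prec 0 b) :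
    prec 0 (a + b) := by
  simpa using ho.add_lt_add ha hb

theorem lt_iff_sub_pos (ho : IsTransOrder prec) {a b : V k} : prec a b ↔ prec 0 (b - a) :=
  ⟨fun h => by simpa [← sub_eq_add_neg] using ho.invariant a b (-a) h,
    fun h => by simpa using ho.invariant 0 (b - a) a h⟩

theorem ne_zero_of_pos (ho : IsTransOrder prec) {a : V k} (ha : prec 0 a) : a ≠ 0 :=
  fun h => ho.irrefl 0 (h ▸ ha)

theorem pos_or_neg_pos (ho : IsTransOrder prec) {a : V k} (ha : a ≠ 0) :
    prec 0 a ∨ prec 0 (-a) :=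
  (ho.total 0 a (Ne.symm ha)).imp id fun h => by simpa using ho.invariant a 0 (-a) h

theorem not_pos_neg_of_pos (ho : IsTransOrder prec) {a : V k} (ha : prec 0 a) :
    ¬ prec 0 (-a) :=
  fun h => ho.irrefl 0 (by simpa using ho.add_pos ha h)

theorem nsmul_pos (ho : IsTransOrder prec) {g : V k} (hg : prec 0 g) :
    ∀ {n : ℕ}, n ≠ 0 → prec 0 (n • g)
  | 1, _ => by simpa using hg
  | n + 2, _ => by
    rw [succ_nsmul]
    exact ho.add_pos (ho.nsmul_pos hg n.succ_ne_zero) hg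

theorem exists_pos (ho : IsTransOrder prec) (hk : 1 ≤ k) : ∃ e : V k, prec 0 e := by
  have he : (Pi.single ⟨0, hk⟩ 1 : V k) ≠ 0 := by simp
  rcases ho.pos_or_neg_pos he with h | h
  exacts [⟨_, h⟩, ⟨_, h⟩]

end IsTransOrder

section Shifts

variable {prec : V k → V k → Prop} {A : Set (V k)}

theorem mem_shiftPos {z u : V k} : u ∈ shiftPos prec A z ↔ prec 0 u ∧ u + z ∈ A := by
  refine ⟨fun ⟨⟨a, ha, hau⟩, hu⟩ => ⟨hu, by rwa [← hau, neg_add_cancel_right]⟩,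
    fun ⟨hu, hA⟩ => ⟨⟨u + z, hA, add_neg_cancel_right u z⟩, hu⟩⟩

theorem shiftPos_subset {z : V k} : shiftPos prec A z ⊆ {t | prec 0 t} :=
  fun _ hu => (mem_shiftPos.1 hu).1

theorem shiftPos_zero (hA : A ⊆ {t | prec 0 t}) : shiftPos prec A 0 = A := by
  ext u
  simpa [mem_shiftPos] using fun hu => hA hu

theorem pos_add_of_mem_insert (ho : IsTransOrder prec) (hA : A ⊆ {t | prec 0 t}) {u z : V k}
    (hu : prec 0 u) (hz : z ∈ insert 0 A) : prec 0 (u + z) := by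
  rcases hz with rfl | hz
  exacts [by simpa using hu, ho.add_pos hu (hA hz)]

theorem shiftPos_add (ho : IsTransOrder prec) {z₁ z₂ : V k}
    (hz₂ : z₂ ∈ insert 0 (shiftPos prec A z₁)) :
    shiftPos prec A (z₁ + z₂) = shiftPos prec (shiftPos prec A z₁) z₂ := by
  ext u
  simp only [mem_shiftPos, ← add_assoc, add_right_comm u z₂ z₁]
  exact ⟨fun ⟨hu, h⟩ => ⟨hu, pos_add_of_mem_insert ho shiftPos_subset hu hz₂, h⟩,
    fun ⟨hu, _, h⟩ => ⟨hu, h⟩⟩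

theorem add_mem_of_mem_insert_shiftPos {z v : V k} (hz : z ∈ insert 0 A)
    (hv : v ∈ insert 0 (shiftPos prec A z)) (hne : v + z ≠ 0) : v + z ∈ A := by
  rcases hv with rfl | hv
  · rw [zero_add] at hne ⊢
    exact hz.resolve_left hne
  · exact (mem_shiftPos.1 hv).2

theorem mem_Gset_iff (hA : A ⊆ {t | prec 0 t}) {g : V k} :
    g ∈ Gset prec A ↔ g ∈ insert 0 A ∧ ∀ u, prec 0 u → (u ∈ A ↔ u + g ∈ A) := by
  refine and_congr_right fun _ => ?_
  simp only [Set.ext_iff, mem_shiftPos]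
  exact forall_congr' fun u =>
    ⟨fun h hu => ⟨fun hu' => (h.2 hu').2, fun hg => h.1 ⟨hu, hg⟩⟩,
      fun h => ⟨fun ⟨hu, hg⟩ => (h hu).2 hg, fun hu' => ⟨hA hu', (h (hA hu')).1 hu'⟩⟩⟩

theorem mem_iff_add_mem_of_mem_Gset (hA : A ⊆ {t | prec 0 t}) {g u : V k}
    (hg : g ∈ Gset prec A) (hu : prec 0 u) : u ∈ A ↔ u + g ∈ A :=
  ((mem_Gset_iff hA).1 hg).2 u hu

theorem zero_mem_Gset (hA : A ⊆ {t | prec 0 t}) : (0 : V k) ∈ Gset prec A :=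
  ⟨Set.mem_insert _ _, shiftPos_zero hA⟩

theorem mem_of_mem_Gset {g : V k} (hg : g ∈ Gset prec A) (hne : g ≠ 0) : g ∈ A :=
  hg.1.resolve_left hne

theorem add_mem_insert_of_mem_Gset (hA : A ⊆ {t | prec 0 t}) {v g : V k}
    (hv : v ∈ insert 0 A) (hg : g ∈ Gset prec A) : v + g ∈ insert 0 A := by
  rcases hv with rfl | hv
  · simpa using hg.1
  · exact Or.inr ((mem_iff_add_mem_of_mem_Gset hA hg (hA hv)).1 hv)

theorem add_mem_Gset (ho : IsTransOrder prec) (hA : A ⊆ {t | prec 0 t}) {g₁ g₂ : V k}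
    (h₁ : g₁ ∈ Gset prec A) (h₂ : g₂ ∈ Gset prec A) : g₁ + g₂ ∈ Gset prec A := by
  refine (mem_Gset_iff hA).2 ⟨add_mem_insert_of_mem_Gset hA h₁.1 h₂, fun u hu => ?_⟩
  rw [← add_assoc, mem_iff_add_mem_of_mem_Gset hA h₁ hu]
  exact mem_iff_add_mem_of_mem_Gset hA h₂ (pos_add_of_mem_insert ho hA hu h₁.1)

theorem nsmul_mem_Gset (ho : IsTransOrder prec) (hA : A ⊆ {t | prec 0 t}) {g : V k}
    (hg : g ∈ Gset prec A) : ∀ n : ℕ, n • g ∈ Gset prec A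
  | 0 => by simpa using zero_mem_Gset hA
  | n + 1 => by
    rw [succ_nsmul]
    exact add_mem_Gset ho hA (nsmul_mem_Gset ho hA hg n) hg

theorem sub_mem_Gset (ho : IsTransOrder prec) (hA : A ⊆ {t | prec 0 t}) {g₁ g₂ : V k}
    (h₁ : g₁ ∈ Gset prec A) (h₂ : g₂ ∈ Gset prec A) (hpos : prec 0 (g₁ - g₂)) :
    g₁ - g₂ ∈ Gset prec A := by
  have hshift : ∀ u, prec 0 u → (u + (g₁ - g₂) ∈ A ↔ u + (g₁ - g₂) + g₂ ∈ A) := fun u hu =>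
    mem_iff_add_mem_of_mem_Gset hA h₂ (ho.add_pos hu hpos)
  simp only [add_assoc, sub_add_cancel] at hshift
  refine (mem_Gset_iff hA).2 ⟨Or.inr ?_, fun u hu => ?_⟩
  · have hg₁ : prec 0 g₁ := by
      simpa using pos_add_of_mem_insert ho hA hpos h₂.1
    rw [mem_iff_add_mem_of_mem_Gset hA h₂ hpos, sub_add_cancel]
    exact mem_of_mem_Gset h₁ (ho.ne_zero_of_pos hg₁)
  · rw [hshift u hu]
    exact mem_iff_add_mem_of_mem_Gset hA h₁ hu

end Shifts

section Lattice

variable {prec : V k → V k → Prop} {A B : Set (V k)}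

theorem zero_mem_Lset (hA : A ⊆ {t | prec 0 t}) : (0 : V k) ∈ Lset prec A :=
  Or.inl (zero_mem_Gset hA)

theorem neg_mem_Lset {s : V k} (hs : s ∈ Lset prec A) : -s ∈ Lset prec A := by
  rcases hs with h | h
  exacts [Or.inr (by simpa using h), Or.inl h]

theorem Lset_mono (h : Gset prec A ⊆ Gset prec B) : Lset prec A ⊆ Lset prec B :=
  Set.union_subset_union h (Set.neg_subset_neg.2 h)

theorem sub_mem_Lset (ho : IsTransOrder prec) (hA : A ⊆ {t | prec 0 t}) {g₁ g₂ : V k}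
    (h₁ : g₁ ∈ Gset prec A) (h₂ : g₂ ∈ Gset prec A) : g₁ - g₂ ∈ Lset prec A := by
  by_cases h : g₁ - g₂ = 0
  · rw [h]
    exact zero_mem_Lset hA
  rcases ho.pos_or_neg_pos h with h | h
  · exact Or.inl (sub_mem_Gset ho hA h₁ h₂ h)
  · rw [neg_sub] at h
    exact Or.inr (by simpa using sub_mem_Gset ho hA h₂ h₁ h)

theorem add_mem_Lset (ho : IsTransOrder prec) (hA : A ⊆ {t | prec 0 t}) {s₁ s₂ : V k}
    (h₁ : s₁ ∈ Lset prec A) (h₂ : s₂ ∈ Lset prec A) : s₁ + s₂ ∈ Lset prec A := by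
  rcases h₁ with h₁ | h₁ <;> rcases h₂ with h₂ | h₂
  · exact Or.inl (add_mem_Gset ho hA h₁ h₂)
  · simpa using sub_mem_Lset ho hA h₁ h₂
  · simpa [add_comm] using sub_mem_Lset ho hA h₂ h₁
  · exact Or.inr (by simpa [add_comm] using add_mem_Gset ho hA h₁ h₂)

theorem mem_Gset_of_mem_Lset (ho : IsTransOrder prec) (hA : A ⊆ {t | prec 0 t}) {s : V k}
    (hs : s ∈ Lset prec A) (hpos : prec 0 s) : s ∈ Gset prec A := by
  refine hs.resolve_right fun h => ho.not_pos_neg_of_pos hpos (hA (mem_of_mem_Gset h ?_))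
  simpa using ho.ne_zero_of_pos hpos

theorem Gset_subset_Gset_shiftPos (ho : IsTransOrder prec) (hA : A ⊆ {t | prec 0 t})
    {z : V k} (hz : z ∈ insert 0 A) : Gset prec A ⊆ Gset prec (shiftPos prec A z) := by
  intro g hg
  have hgz : g ∈ insert 0 (shiftPos prec A z) := by
    by_cases hg0 : g = 0
    · exact Or.inl hg0
    have hgpos : prec 0 g := hA (mem_of_mem_Gset hg hg0)
    have hpos : prec 0 (g + z) := pos_add_of_mem_insert ho hA hgpos hz
    rw [add_comm] at hpos
    refine Or.inr (mem_shiftPos.2 ⟨hgpos, ?_⟩)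
    rw [add_comm]
    exact (add_mem_insert_of_mem_Gset hA hz hg).resolve_left (ho.ne_zero_of_pos hpos)
  refine ⟨hgz, ?_⟩
  rw [← shiftPos_add ho hgz, add_comm, shiftPos_add ho (by rwa [hg.2]), hg.2]

end Lattice

section TranslationInvariance

variable {prec : V k → V k → Prop} {A B : Set (V k)}

theorem TIPat_iff {z : V k} :
    TIPat prec A z ↔ ∃ w ∈ Lset prec (shiftPos prec A z), prec 0 (w + z) ∧
      ∃ y ∈ Gset prec A, prec (w + z) y := by
  constructor
  · rintro ⟨x, ⟨⟨w, hw, rfl⟩, hxpos⟩, y, hy, hxy⟩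
    exact ⟨w, hw, hxpos, y, hy, hxy⟩
  · rintro ⟨w, hw, hpos, y, hy, hxy⟩
    exact ⟨w + z, ⟨⟨w, hw, rfl⟩, hpos⟩, y, hy, hxy⟩

theorem TIPat_of_lt {y z : V k} (hz : prec 0 z) (hy : y ∈ Gset prec A) (hzy : prec z y) :
    TIPat prec A z :=
  TIPat_iff.2 ⟨0, zero_mem_Lset shiftPos_subset, by simpa using hz, y, hy, by simpa using hzy⟩

theorem TIPat_zero_of_mem_Gset (ho : IsTransOrder prec) (hA : A ⊆ {t | prec 0 t}) {g : V k}
    (hg : g ∈ Gset prec A) (hpos : prec 0 g) : TIPat prec A 0 := by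
  refine TIPat_iff.2 ⟨g, ?_, by simpa using hpos, g + g, add_mem_Gset ho hA hg hg, ?_⟩
  · rw [shiftPos_zero hA]
    exact Or.inl hg
  · simpa using ho.invariant 0 g g hpos

theorem TIPat.exists_pos_mem_Gset (ho : IsTransOrder prec) {z : V k} (ht : TIPat prec A z) :
    ∃ y ∈ Gset prec A, prec 0 y := by
  obtain ⟨w, -, hpos, y, hy, hlt⟩ := TIPat_iff.1 ht
  exact ⟨y, hy, ho.trans hpos hlt⟩

theorem TIPat_add (ho : IsTransOrder prec) (hA : A ⊆ {t | prec 0 t}) {w z c y₁ y₂ : V k}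
    (hw : w ∈ Lset prec (shiftPos prec A (z + c))) (hwz : prec 0 (w + z))
    (hy₁ : y₁ ∈ Gset prec A) (hwy : prec (w + z) y₁)
    (hc : prec 0 c) (hy₂ : y₂ ∈ Gset prec A) (hcy : prec c y₂) : TIPat prec A (z + c) := by
  refine TIPat_iff.2 ⟨w, hw, ?_, y₁ + y₂, add_mem_Gset ho hA hy₁ hy₂, ?_⟩ <;> rw [← add_assoc]
  exacts [ho.add_pos hwz hc, ho.add_lt_add hwy hcy]

theorem mem_Dhat {u : V k} :
    u ∈ Dhat prec A ↔ ∃ z ∈ insert 0 A, TIPat prec A z ∧ u ∈ shiftPos prec A z := by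
  simp only [Dhat, Set.mem_iUnion, Set.mem_sep_iff, exists_prop, and_assoc]

theorem mem_Dhat_of_mem_Gset (ho : IsTransOrder prec) (hA : A ⊆ {t | prec 0 t}) {g : V k}
    (hg : g ∈ Gset prec A) (hne : g ≠ 0) : g ∈ Dhat prec A := by
  have hgA := mem_of_mem_Gset hg hne
  refine mem_Dhat.2 ⟨0, Set.mem_insert _ _, TIPat_zero_of_mem_Gset ho hA hg (hA hgA), ?_⟩
  rwa [shiftPos_zero hA]

theorem Dhat_subset_of_shiftPos_eq (ho : IsTransOrder prec) (hA : A ⊆ {t | prec 0 t})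
    (hG : Gset prec B ⊆ Gset prec A) {x y : V k} (hx : x ∈ A) (hB : shiftPos prec A x = B)
    (hy : y ∈ Gset prec A) (hxy : prec x y) : Dhat prec B ⊆ Dhat prec A := by
  intro u hu
  obtain ⟨ζ, hζ, hζt, huζ⟩ := mem_Dhat.1 hu
  obtain ⟨w, hw, hwζ, y₁, hy₁, hwy⟩ := TIPat_iff.1 hζt
  have hζ' : ζ ∈ insert 0 (shiftPos prec A x) := hB ▸ hζ
  have hcomp : shiftPos prec A (ζ + x) = shiftPos prec B ζ := by
    rw [add_comm, shiftPos_add ho hζ', hB]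
  have hpos : prec 0 (ζ + x) := by
    simpa [add_comm] using pos_add_of_mem_insert ho shiftPos_subset (hA hx) hζ'
  refine mem_Dhat.2 ⟨ζ + x, Or.inr ?_, ?_, hcomp ▸ huζ⟩
  · exact add_mem_of_mem_insert_shiftPos (Or.inr hx) hζ' (ho.ne_zero_of_pos hpos)
  · exact TIPat_add ho hA (hcomp ▸ hw) hwζ (hG hy₁) hwy (hA hx) hy hxy

theorem add_mem_Dhat_symm_of_mem_Dhat (ho : IsTransOrder prec) (hA : A ⊆ {t | prec 0 t})
    {a s : V k} (ha : a ∈ Dhat prec A) (hs : s ∈ Lset prec A) :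
    a + s ∈ Dhat prec A ∪ {0} ∪ -Dhat prec A := by
  obtain ⟨ζ, hζ, hζt, haζ⟩ := mem_Dhat.1 ha
  have hG := Gset_subset_Gset_shiftPos ho hA hζ
  have hapos : prec 0 a := shiftPos_subset haζ
  rcases hs with hs | hs
  · refine Or.inl (Or.inl (mem_Dhat.2 ⟨ζ, hζ, hζt, ?_⟩))
    exact (mem_iff_add_mem_of_mem_Gset shiftPos_subset (hG hs) hapos).1 haζ
  by_cases h0 : a + s = 0
  · exact Or.inl (Or.inr h0)
  rcases ho.pos_or_neg_pos h0 with hpos | hneg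
  · refine Or.inl (Or.inl (mem_Dhat.2 ⟨ζ, hζ, hζt, ?_⟩))
    refine (mem_iff_add_mem_of_mem_Gset shiftPos_subset (hG hs) hpos).2 ?_
    simpa using haζ
  -- `a + s ≺ 0`: `-(a + s)` lies in the shift by `ζ + a`, which inherits TIP from `ζ`
  have hζa : ζ + a ∈ A := by
    rw [add_comm]
    exact (mem_shiftPos.1 haζ).2
  refine Or.inr (mem_Dhat.2 ⟨ζ + a, Or.inr hζa, ?_, mem_shiftPos.2 ⟨hneg, ?_⟩⟩)
  · obtain ⟨w, hw, hwζ, y, hy, hwy⟩ := TIPat_iff.1 hζt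
    have hL : Lset prec (shiftPos prec A ζ) ⊆ Lset prec (shiftPos prec A (ζ + a)) := by
      rw [shiftPos_add ho (Or.inr haζ)]
      exact Lset_mono (Gset_subset_Gset_shiftPos ho shiftPos_subset (Or.inr haζ))
    refine TIPat_add ho hA (hL hw) hwζ hy hwy hapos hs ?_
    rw [ho.lt_iff_sub_pos]
    simpa [sub_eq_add_neg, add_comm] using hneg
  · have hpos := pos_add_of_mem_insert ho hA hneg (Or.inr hζa)
    have hrw : -(a + s) + (ζ + a) = ζ + -s := by abel
    rw [hrw] at hpos ⊢
    exact (add_mem_insert_of_mem_Gset hA hζ hs).resolve_left (ho.ne_zero_of_pos hpos)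

theorem neg_mem_union_zero_union_neg {D : Set (V k)} {a : V k} (ha : a ∈ D ∪ {0} ∪ -D) :
    -a ∈ D ∪ {0} ∪ -D := by
  simp only [Set.mem_union, Set.mem_neg, neg_neg, Set.mem_singleton_iff, neg_eq_zero] at ha ⊢
  tauto

theorem add_mem_Dhat_symm (ho : IsTransOrder prec) (hA : A ⊆ {t | prec 0 t}) {a s : V k}
    (ha : a ∈ Dhat prec A ∪ {0} ∪ -Dhat prec A) (hs : s ∈ Lset prec A) :
    a + s ∈ Dhat prec A ∪ {0} ∪ -Dhat prec A := by
  rcases ha with (ha | rfl) | ha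
  · exact add_mem_Dhat_symm_of_mem_Dhat ho hA ha hs
  · rw [zero_add]
    by_cases hs0 : s = 0
    · exact Or.inl (Or.inr hs0)
    rcases hs with hs | hs
    · exact Or.inl (Or.inl (mem_Dhat_of_mem_Gset ho hA hs hs0))
    · exact Or.inr (mem_Dhat_of_mem_Gset ho hA hs (neg_ne_zero.2 hs0))
  · have h := neg_mem_union_zero_union_neg
      (add_mem_Dhat_symm_of_mem_Dhat ho hA ha (neg_mem_Lset hs))
    rwa [neg_add, neg_neg, neg_neg] at h

theorem tr_eq_self_of_add_mem {S L : Set (V k)} (hL : ∀ s ∈ L, -s ∈ L)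
    (hS : ∀ a ∈ S, ∀ s ∈ L, a + s ∈ S) {s : V k} (hs : s ∈ L) : tr S s = S := by
  ext u
  refine ⟨fun ⟨a, ha, hau⟩ => hau ▸ hS a ha s hs, fun hu => ⟨u + -s, ?_, by simp⟩⟩
  exact hS u hu _ (hL s hs)

theorem shiftPos_shiftPos_sub (ho : IsTransOrder prec) (hA : A ⊆ {t | prec 0 t}) {x y : V k}
    (hx : x ∈ A) (hy : y ∈ Gset prec A) (hxy : prec x y) :
    y - x ∈ shiftPos prec A x ∧ shiftPos prec (shiftPos prec A x) (y - x) = A := by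
  have hmem : y - x ∈ shiftPos prec A x := by
    refine mem_shiftPos.2 ⟨ho.lt_iff_sub_pos.1 hxy, ?_⟩
    rw [sub_add_cancel]
    exact mem_of_mem_Gset hy (ho.ne_zero_of_pos (ho.trans (hA hx) hxy))
  refine ⟨hmem, ?_⟩
  rw [← shiftPos_add ho (Or.inr hmem), add_sub_cancel, hy.2]

theorem Gset_shiftPos_eq (ho : IsTransOrder prec) (hA : A ⊆ {t | prec 0 t}) {x y : V k}
    (hx : x ∈ A) (hy : y ∈ Gset prec A) (hxy : prec x y) :
    Gset prec (shiftPos prec A x) = Gset prec A := by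
  obtain ⟨hmem, hback⟩ := shiftPos_shiftPos_sub ho hA hx hy hxy
  refine Set.Subset.antisymm ?_ (Gset_subset_Gset_shiftPos ho hA (Or.inr hx))
  simpa [hback] using Gset_subset_Gset_shiftPos ho shiftPos_subset (Or.inr hmem)

theorem Dhat_shiftPos_eq (ho : IsTransOrder prec) (hA : A ⊆ {t | prec 0 t}) {x y : V k}
    (hx : x ∈ A) (hy : y ∈ Gset prec A) (hxy : prec x y) :
    Dhat prec (shiftPos prec A x) = Dhat prec A := by
  obtain ⟨hmem, hback⟩ := shiftPos_shiftPos_sub ho hA hx hy hxy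
  have hG := Gset_shiftPos_eq ho hA hx hy hxy
  refine Set.Subset.antisymm (Dhat_subset_of_shiftPos_eq ho hA hG.le hx rfl hy hxy) ?_
  refine Dhat_subset_of_shiftPos_eq ho shiftPos_subset hG.ge hmem hback (hG ▸ hy) ?_
  simpa [ho.lt_iff_sub_pos] using hA hx

end TranslationInvariance

section Boxes

theorem Kc_mono {c c' : ℕ} (h : c ≤ c') : Kc k c ⊆ Kc k c' :=
  fun _ ht i => (ht i).trans (by exact_mod_cast h)

theorem add_mem_Kc {u v : V k} {a b : ℕ} (hu : u ∈ Kc k a) (hv : v ∈ Kc k b) :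
    u + v ∈ Kc k (a + b) := fun i => by
  push_cast
  exact (abs_add_le _ _).trans (add_le_add (hu i) (hv i))

theorem nsmul_mem_Kc {v : V k} {c : ℕ} (hv : v ∈ Kc k c) (n : ℕ) : n • v ∈ Kc k (n * c) :=
  fun i => by
  simpa [abs_mul] using mul_le_mul_of_nonneg_left (hv i) (Nat.cast_nonneg (α := ℤ) n)

theorem exists_mem_Kc (v : V k) : ∃ c : ℕ, v ∈ Kc k c :=
  ⟨Finset.univ.sup fun i => (v i).natAbs, fun i => by
    rw [Int.abs_eq_natAbs]
    exact_mod_cast Finset.le_sup (f := fun i => (v i).natAbs) (Finset.mem_univ i)⟩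

theorem Kc_finite (c : ℕ) : (Kc k c).Finite :=
  (Set.Finite.pi fun _ => Set.finite_Icc (-(c : ℤ)) c).subset fun _ ht i _ => abs_le.1 (ht i)

end Boxes

section Windows

variable {prec : V k → V k → Prop}

def IsPeriodOnBox (prec : V k → V k → Prop) (A : Set (V k)) (δ : V k) (R : ℕ) : Prop :=
  ∀ u, prec 0 u → u ∈ Kc k R → (u ∈ A ↔ u + δ ∈ A)

-- the points counted by `λ_{i,p}` in Condition `(D^Λ)`, for `E = D_i`
noncomputable def windowMatches (prec : V k → V k → Prop) (Λ : Finset (V k)) (E : Set (V k))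
    (p : ℕ) : Finset (V k) :=
  Λ.filter fun t => window prec Λ t p = E ∩ Kc k p

theorem mem_window {Λ : Set (V k)} {t u : V k} {c : ℕ} :
    u ∈ window prec Λ t c ↔ prec 0 u ∧ u ∈ Kc k c ∧ t + u ∈ Λ := by
  simp only [window, posPart, tr, Set.mem_inter_iff, Set.mem_image]
  refine ⟨fun ⟨⟨⟨a, ha, hau⟩, hK⟩, hu⟩ => ⟨hu, hK, ?_⟩, fun ⟨hu, hK, hΛ⟩ => ⟨⟨⟨_, hΛ, ?_⟩, hK⟩, hu⟩⟩
  · convert ha using 1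
    rw [← hau]
    abel
  · abel

theorem window_eq_of_le {Λ E : Set (V k)} {t : V k} {p P : ℕ} (hpP : p ≤ P)
    (hw : window prec Λ t P = E ∩ Kc k P) : window prec Λ t p = E ∩ Kc k p := by
  ext u
  have hu := Set.ext_iff.1 hw u
  simp only [mem_window, Set.mem_inter_iff] at hu ⊢
  constructor
  · exact fun ⟨h₁, h₂, h₃⟩ => ⟨(hu.1 ⟨h₁, Kc_mono hpP h₂, h₃⟩).1, h₂⟩
  · exact fun ⟨h₁, h₂⟩ => ⟨(hu.2 ⟨h₁, Kc_mono hpP h₂⟩).1, h₂, (hu.2 ⟨h₁, Kc_mono hpP h₂⟩).2.2⟩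

theorem add_mem_of_window_eq {Λ E : Set (V k)} {t v : V k} {P : ℕ}
    (hw : window prec Λ t P = E ∩ Kc k P) (hv : v ∈ E ∩ Kc k P) : t + v ∈ Λ :=
  (mem_window.1 (hw ▸ hv : v ∈ window prec Λ t P)).2.2

theorem window_add_eq (ho : IsTransOrder prec) {Λ E : Set (V k)} {t x : V k} {P p c : ℕ}
    (hE : E ⊆ {t | prec 0 t}) (hw : window prec Λ t P = E ∩ Kc k P)
    (hx : x ∈ E) (hxK : x ∈ Kc k c) (hpc : p + c ≤ P) :
    window prec Λ (t + x) p = shiftPos prec E x ∩ Kc k p := by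
  ext u
  rw [mem_window, Set.mem_inter_iff, mem_shiftPos, add_assoc, add_comm x u]
  refine ⟨fun ⟨hu, huK, hΛ⟩ => ⟨⟨hu, ?_⟩, huK⟩, fun ⟨⟨hu, hE'⟩, huK⟩ => ⟨hu, huK, ?_⟩⟩
  · have h : u + x ∈ window prec Λ t P :=
      mem_window.2 ⟨ho.add_pos hu (hE hx), Kc_mono hpc (add_mem_Kc huK hxK), hΛ⟩
    exact (hw ▸ h).1
  · exact add_mem_of_window_eq hw ⟨hE', Kc_mono hpc (add_mem_Kc huK hxK)⟩

theorem isPeriodOnBox_of_window_eq (ho : IsTransOrder prec) {Λ E : Set (V k)} {t δ : V k}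
    {Q R c : ℕ} (hw : window prec Λ t Q = E ∩ Kc k Q)
    (hw' : window prec Λ (t + δ) Q = E ∩ Kc k Q)
    (hδ : prec 0 δ) (hδK : δ ∈ Kc k c) (hQ : R + c ≤ Q) : IsPeriodOnBox prec E δ R := by
  intro u hu huK
  have huQ : u ∈ Kc k Q := Kc_mono (by omega) huK
  have huδQ : u + δ ∈ Kc k Q := Kc_mono hQ (add_mem_Kc huK hδK)
  have hshift : u ∈ window prec Λ (t + δ) Q ↔ u + δ ∈ window prec Λ t Q := by
    simp only [mem_window, add_assoc, add_comm δ u, hu, ho.add_pos hu hδ, huQ, huδQ, true_and]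
  rw [hw, hw'] at hshift
  simpa [huQ, huδQ] using hshift

end Windows

section Density

variable {C : CondD k}

theorem tendsto_card_windowMatches {i : ℕ} (hi : (i : ℕ∞) < C.q) (p : ℕ) :
    Tendsto (fun n => ((windowMatches C.prec (C.Lam n) (C.D i) p).card : ℝ) / (C.Lam n).card)
      atTop (nhds (C.lamP i p)) :=
  C.tendsto_lamP i p hi

theorem lamP_antitone {i : ℕ} (hi : (i : ℕ∞) < C.q) : Antitone (C.lamP i) := by
  refine fun P P' h => le_of_tendsto_of_tendsto' (tendsto_card_windowMatches hi P')
    (tendsto_card_windowMatches hi P) fun n => ?_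
  gcongr
  exact Finset.monotone_filter_right _ fun t _ ht => window_eq_of_le h ht

theorem lam_le_lamP {i : ℕ} (hi : (i : ℕ∞) < C.q) (P : ℕ) : C.lam i ≤ C.lamP i P :=
  le_of_tendsto (C.tendsto_lam i hi) <| (eventually_ge_atTop P).mono fun _ => (lamP_antitone hi ·)

theorem lam_le_lam_of_shiftPos_eq {i l : ℕ} (hi : (i : ℕ∞) < C.q) (hl : (l : ℕ∞) < C.q)
    {x : V k} (hx : x ∈ C.D i) (hsh : shiftPos C.prec (C.D i) x = C.D l) :
    C.lam i ≤ C.lam l := by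
  obtain ⟨c, hc⟩ := exists_mem_Kc x
  have hcount : ∀ p : ℕ, C.lamP i (p + c) ≤ C.lamP l p := fun p => by
    refine le_of_tendsto_of_tendsto' (tendsto_card_windowMatches hi (p + c))
      (tendsto_card_windowMatches hl p) fun n => ?_
    refine div_le_div_of_nonneg_right ?_ (Nat.cast_nonneg _)
    refine Nat.cast_le.2 <| Finset.card_le_card_of_injOn (· + x) (fun t ht => ?_)
      (add_left_injective x).injOn
    simp only [windowMatches, Finset.mem_coe, Finset.mem_filter] at ht ⊢
    refine ⟨add_mem_of_window_eq ht.2 ⟨hx, Kc_mono (by omega) hc⟩, ?_⟩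
    rw [← hsh]
    exact window_add_eq C.ord (C.D_subset i hi) ht.2 hx hc le_rfl
  exact ge_of_tendsto (C.tendsto_lam l hl) (Eventually.of_forall fun p =>
    (lam_le_lamP hi (p + c)).trans (hcount p))

theorem lam_mul_le_of_card_mul_le {i : ℕ} (hi : (i : ℕ∞) < C.q) {Q m : ℕ}
    (hcount : ∀ n, (windowMatches C.prec (C.Lam n) (C.D i) Q).card * m ≤ (C.Lam n).card) :
    C.lam i * m ≤ 1 := by
  have hlim : C.lamP i Q * m ≤ 1 := by
    refine le_of_tendsto ((tendsto_card_windowMatches hi Q).mul_const (m : ℝ)) ?_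
    filter_upwards [C.card_top.eventually_ge_atTop 1] with n hn
    rw [div_mul_eq_mul_div, div_le_one (by exact_mod_cast hn)]
    exact_mod_cast hcount n
  calc C.lam i * m ≤ C.lamP i Q * m := by gcongr; exact lam_le_lamP hi Q
    _ ≤ 1 := hlim

end Density

section Periods

variable {prec : V k → V k → Prop} {A : Set (V k)}

theorem add_nsmul_mem_of_mem_Gset_shiftPos (ho : IsTransOrder prec) (hA : A ⊆ {t | prec 0 t})
    {z g : V k} (hz : z ∈ A) (hg : g ∈ Gset prec (shiftPos prec A z)) (n : ℕ) :
    z + n • g ∈ A := by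
  have hn := (nsmul_mem_Gset ho shiftPos_subset hg n).1
  have hpos := pos_add_of_mem_insert ho shiftPos_subset (hA hz) hn
  rw [add_comm] at hpos ⊢
  exact add_mem_of_mem_insert_shiftPos (Or.inr hz) hn (ho.ne_zero_of_pos hpos)

theorem card_windowMatches_mul_le (ho : IsTransOrder prec) {Λ : Finset (V k)} {E : Set (V k)}
    {z g : V k} {p R Q c : ℕ} (hmem : ∀ i ≤ p, z + i • g ∈ E ∩ Kc k Q) (hg : prec 0 g)
    (hgK : g ∈ Kc k c) (hQ : R + p * c ≤ Q)
    (hper : ∀ a, 1 ≤ a → a ≤ p → ¬ IsPeriodOnBox prec E (a • g) R) :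
    (windowMatches prec Λ E Q).card * (p + 1) ≤ Λ.card := by
  have hne : ∀ t ∈ windowMatches prec Λ E Q, ∀ t' ∈ windowMatches prec Λ E Q, ∀ i i',
      i < i' → i' ≤ p → t + i • g ≠ t' + i' • g := by
    intro t ht t' ht' i i' hii hi' heq
    simp only [windowMatches, Finset.mem_filter] at ht ht'
    have ht_eq : t = t' + (i' - i) • g := by
      refine add_right_cancel (b := i • g) ?_
      rw [heq, add_assoc, ← add_nsmul, Nat.sub_add_cancel hii.le]
    refine hper (i' - i) (by omega) (by omega) ?_
    refine isPeriodOnBox_of_window_eq ho ht'.2 (ht_eq ▸ ht.2) (ho.nsmul_pos hg (by omega))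
      (nsmul_mem_Kc hgK _) (le_trans ?_ hQ)
    gcongr
    omega
  rw [← Finset.card_range (p + 1), ← Finset.card_product]
  refine Finset.card_le_card_of_injOn (fun q => q.1 + (z + q.2 • g)) ?_ ?_
  · rintro ⟨t, i⟩ hti
    simp only [Finset.coe_product, Set.mem_prod, Finset.mem_coe, Finset.mem_range,
      windowMatches, Finset.mem_filter] at hti
    exact add_mem_of_window_eq hti.1.2 (hmem i (by omega))
  · rintro ⟨t, i⟩ hti ⟨t', i'⟩ hti' heq
    simp only [Finset.coe_product, Set.mem_prod, Finset.mem_coe, Finset.mem_range] at hti hti'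
    have heq' : t + i • g = t' + i' • g := by
      simpa [← add_assoc, add_right_comm _ z] using heq
    rcases lt_trichotomy i i' with hii | rfl | hii
    · exact absurd heq' (hne t hti.1 t' hti'.1 i i' hii (by omega))
    · rw [add_right_cancel heq']
    · exact absurd heq'.symm (hne t' hti'.1 t hti.1 i' i hii (by omega))

theorem shiftPos_sub_eq_of_isPeriodOnBox (ho : IsTransOrder prec) (hA : A ⊆ {t | prec 0 t})
    {z g : V k} (hz : z ∈ A) (hg : g ∈ Gset prec (shiftPos prec A z)) (hpos : prec 0 (z - g))
    (hper : ∀ R, ∃ a, 1 ≤ a ∧ IsPeriodOnBox prec A (a • g) R) :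
    z - g ∈ A ∧ shiftPos prec A (z - g) = shiftPos prec A z := by
  have key : ∀ u, prec 0 (u + (z - g)) → ∃ n : ℕ, (u + (z - g) ∈ A ↔ u + n • g + z ∈ A) := by
    intro u hu
    obtain ⟨R, hR⟩ := exists_mem_Kc (u + (z - g))
    obtain ⟨a, ha, hperR⟩ := hper R
    obtain ⟨n, rfl⟩ : ∃ n, a = n + 1 := ⟨a - 1, by omega⟩
    refine ⟨n, ?_⟩
    rw [hperR _ hu hR, succ_nsmul]
    abel_nf
  constructor
  · obtain ⟨n, hn⟩ := key 0 (by simpa using hpos)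
    rw [zero_add, zero_add, add_comm] at hn
    exact hn.2 (add_nsmul_mem_of_mem_Gset_shiftPos ho hA hz hg n)
  · ext u
    simp only [mem_shiftPos]
    refine and_congr_right fun hu => ?_
    obtain ⟨n, hn⟩ := key u (ho.add_pos hu hpos)
    have hng := nsmul_mem_Gset ho shiftPos_subset hg n
    have hun : prec 0 (u + n • g) := pos_add_of_mem_insert ho shiftPos_subset hu hng.1
    have h := mem_iff_add_mem_of_mem_Gset shiftPos_subset hng hu
    simp only [mem_shiftPos, hu, hun, true_and] at h
    rw [hn, h]

end Periods

section TIPConsequences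

theorem exists_isPeriodOnBox (C : CondD k) {j : ℕ} (hj : (j : ℕ∞) < C.q) {z g : V k}
    (hz : z ∈ C.D j) (hg : g ∈ Gset C.prec (shiftPos C.prec (C.D j) z)) (hgpos : C.prec 0 g)
    (R : ℕ) : ∃ a, 1 ≤ a ∧ IsPeriodOnBox C.prec (C.D j) (a • g) R := by
  obtain ⟨p, hp⟩ := exists_nat_gt (C.lam j)⁻¹
  obtain ⟨cz, hcz⟩ := exists_mem_Kc z
  obtain ⟨cg, hcg⟩ := exists_mem_Kc g
  by_contra! hper
  have hmem : ∀ i ≤ p, z + i • g ∈ C.D j ∩ Kc k (R + cz + p * cg) := fun i hi =>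
    ⟨add_nsmul_mem_of_mem_Gset_shiftPos C.ord (C.D_subset j hj) hz hg i,
      Kc_mono (by nlinarith) (add_mem_Kc hcz (nsmul_mem_Kc hcg i))⟩
  have hlam := lam_mul_le_of_card_mul_le hj fun n =>
    card_windowMatches_mul_le C.ord hmem hgpos hcg (by omega) fun a ha _ => hper a ha
  rw [inv_lt_iff_one_lt_mul₀' (C.lam_pos j hj)] at hp
  push_cast at hlam
  nlinarith

theorem exists_shift_lt_of_TIPat (C : CondD k) {j : ℕ} (hj : (j : ℕ∞) < C.q) {z : V k}
    (hz : z ∈ insert 0 (C.D j)) (ht : TIPat C.prec (C.D j) z) :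
    ∃ x ∈ C.D j, shiftPos C.prec (C.D j) x = shiftPos C.prec (C.D j) z ∧
      ∃ y ∈ Gset C.prec (C.D j), C.prec x y := by
  have ho := C.ord
  have hA := C.D_subset j hj
  obtain ⟨w, hw, hwz, y, hy, hwy⟩ := TIPat_iff.1 ht
  suffices w + z ∈ C.D j ∧ shiftPos C.prec (C.D j) (w + z) = shiftPos C.prec (C.D j) z from
    ⟨w + z, this.1, this.2, y, hy, hwy⟩
  by_cases hwG : w ∈ Gset C.prec (shiftPos C.prec (C.D j) z)
  · refine ⟨add_mem_of_mem_insert_shiftPos hz hwG.1 (ho.ne_zero_of_pos hwz), ?_⟩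
    rw [add_comm, shiftPos_add ho hwG.1, hwG.2]
  -- otherwise the shifted set is periodic along `-w ≻ 0`, and `w + z = z - (-w)`
  have hg : -w ∈ Gset C.prec (shiftPos C.prec (C.D j) z) := hw.resolve_left hwG
  have hw0 : w ≠ 0 := fun h => hwG (h ▸ zero_mem_Gset shiftPos_subset)
  have hgpos : C.prec 0 (-w) := shiftPos_subset (mem_of_mem_Gset hg (neg_ne_zero.2 hw0))
  have hzA : z ∈ C.D j :=
    hz.resolve_left fun h => ho.not_pos_neg_of_pos (by simpa [h] using hwz) hgpos
  rw [add_comm, ← sub_neg_eq_add]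
  exact shiftPos_sub_eq_of_isPeriodOnBox ho hA hzA hg (by simpa [add_comm] using hwz)
    (exists_isPeriodOnBox C hj hzA hg hgpos)

theorem Gset_shiftPos_eq_of_TIPat (C : CondD k) {j : ℕ} (hj : (j : ℕ∞) < C.q) {z : V k}
    (hz : z ∈ insert 0 (C.D j)) (ht : TIPat C.prec (C.D j) z) :
    Gset C.prec (shiftPos C.prec (C.D j) z) = Gset C.prec (C.D j) := by
  obtain ⟨x, hx, hxz, y, hy, hxy⟩ := exists_shift_lt_of_TIPat C hj hz ht
  rw [← hxz]
  exact Gset_shiftPos_eq C.ord (C.D_subset j hj) hx hy hxy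

theorem Dhat_shiftPos_eq_of_TIPat (C : CondD k) {j : ℕ} (hj : (j : ℕ∞) < C.q) {z : V k}
    (hz : z ∈ insert 0 (C.D j)) (ht : TIPat C.prec (C.D j) z) :
    Dhat C.prec (shiftPos C.prec (C.D j) z) = Dhat C.prec (C.D j) := by
  obtain ⟨x, hx, hxz, y, hy, hxy⟩ := exists_shift_lt_of_TIPat C hj hz ht
  rw [← hxz]
  exact Dhat_shiftPos_eq C.ord (C.D_subset j hj) hx hy hxy

theorem lam_eq_of_TIPat (C : CondD k) {j l : ℕ} (hj : (j : ℕ∞) < C.q) (hl : (l : ℕ∞) < C.q)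
    {z : V k} (hz : z ∈ insert 0 (C.D j)) (ht : TIPat C.prec (C.D j) z)
    (hDl : C.D l = shiftPos C.prec (C.D j) z) : C.lam l = C.lam j := by
  obtain ⟨x, hx, hxz, y, hy, hxy⟩ := exists_shift_lt_of_TIPat C hj hz ht
  obtain ⟨hv, hback⟩ := shiftPos_shiftPos_sub C.ord (C.D_subset j hj) hx hy hxy
  rw [hxz, ← hDl] at hv hback
  exact le_antisymm (lam_le_lam_of_shiftPos_eq hl hj hv hback)
    (lam_le_lam_of_shiftPos_eq hj hl hx (hxz.trans hDl.symm))

end TIPConsequences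

section Rank

variable {prec : V k → V k → Prop} {A : Set (V k)}

theorem exists_nsmul_mem_of_finrank_eq (L : AddSubgroup (V k))
    (hL : Module.finrank ℤ L.toIntSubmodule = k) (v : V k) : ∃ n : ℕ, n ≠ 0 ∧ n • v ∈ L := by
  have hquot : Module.finrank ℤ (V k ⧸ L.toIntSubmodule) = 0 := by
    have h := L.toIntSubmodule.finrank_quotient_add_finrank
    rw [hL, Module.finrank_fin_fun] at h
    omega
  obtain ⟨a, ha, hav⟩ := Module.finrank_eq_zero_iff.1 hquot (Submodule.Quotient.mk v)
  rw [← Submodule.Quotient.mk_smul, Submodule.Quotient.mk_eq_zero] at hav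
  refine ⟨a.natAbs, Int.natAbs_ne_zero.2 ha, ?_⟩
  rw [← natCast_zsmul, Int.natCast_natAbs]
  rcases abs_choice a with h | h <;> rw [h]
  exacts [hav, by simpa [neg_smul] using L.neg_mem hav]

theorem exists_lt_mem_Gset_of_latticeRank_eq (ho : IsTransOrder prec)
    (hA : A ⊆ {t | prec 0 t}) (hrank : latticeRank (Lset prec A) = k) {z : V k}
    (hz : prec 0 z) : ∃ y ∈ Gset prec A, prec z y := by
  let L : AddSubgroup (V k) :=
    { carrier := Lset prec A
      zero_mem' := zero_mem_Lset hA
      add_mem' := add_mem_Lset ho hA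
      neg_mem' := neg_mem_Lset }
  have hcl : AddSubgroup.closure (Lset prec A) = L := AddSubgroup.closure_eq L
  obtain ⟨n, hn, hnz⟩ := exists_nsmul_mem_of_finrank_eq L (by rwa [latticeRank, hcl] at hrank) z
  have h2n : (2 * n) • z ∈ Gset prec A := by
    refine mem_Gset_of_mem_Lset ho hA ?_ (ho.nsmul_pos hz (by omega))
    rw [two_mul, add_nsmul]
    exact add_mem_Lset ho hA hnz hnz
  refine ⟨_, h2n, ho.lt_iff_sub_pos.2 ?_⟩
  rw [show 2 * n = (2 * n - 1) + 1 by omega, succ_nsmul, add_sub_cancel_right]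
  exact ho.nsmul_pos hz (by omega)

theorem TIPat_of_latticeRank_eq (ho : IsTransOrder prec) (hA : A ⊆ {t | prec 0 t})
    (hk : 1 ≤ k) (hrank : latticeRank (Lset prec A) = k) {z : V k} (hz : z ∈ insert 0 A) :
    TIPat prec A z := by
  rcases hz with rfl | hz
  · obtain ⟨e, he⟩ := ho.exists_pos hk
    obtain ⟨y, hy, hey⟩ := exists_lt_mem_Gset_of_latticeRank_eq ho hA hrank he
    exact TIPat_zero_of_mem_Gset ho hA hy (ho.trans he hey)
  · obtain ⟨y, hy, hzy⟩ := exists_lt_mem_Gset_of_latticeRank_eq ho hA hrank (hA hz)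
    exact TIPat_of_lt (hA hz) hy hzy

end Rank

section Bounded

variable {prec : V k → V k → Prop} {A : Set (V k)}

theorem eq_zero_of_mem_Gset_of_subset_Kc (ho : IsTransOrder prec) (hA : A ⊆ {t | prec 0 t})
    {c : ℕ} (hc : A ⊆ Kc k c) {g : V k} (hg : g ∈ Gset prec A) : g = 0 := by
  by_contra hg0
  have hpos : prec 0 g := hA (mem_of_mem_Gset hg hg0)
  have hinj : Function.Injective fun n : ℕ => (n + 1) • g := by
    intro m n h
    have h' : ((m + 1 : ℕ) : ℤ) • g = ((n + 1 : ℕ) : ℤ) • g := by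
      simpa only [natCast_zsmul] using h
    have := smul_left_injective ℤ hg0 h'
    omega
  refine Set.infinite_range_of_injective hinj ((Kc_finite c).subset ?_)
  rintro _ ⟨n, rfl⟩
  exact hc (mem_of_mem_Gset (nsmul_mem_Gset ho hA hg _) (ho.ne_zero_of_pos
    (ho.nsmul_pos hpos n.succ_ne_zero)))

end Bounded

/-- The family `D_{l_0},…,D_{l_{b_j}}` (with `l_0 = j`, `z_{l_0} = 0`) is given as data;
index `i` satisfies `(TIP_j)` iff `TIPat prec (D j) (zl i)` holds. -/
theorem stmt3_general (k : ℕ) (hk : 1 ≤ k) (C : CondD k) (j : ℕ) (hj : (j : ℕ∞) < C.q)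
    (b : ℕ) (Dl : Fin (b + 1) → Set (V k)) (zl : Fin (b + 1) → V k)
    (hz0 : zl 0 = 0)
    (hzl : ∀ i, i ≠ 0 → zl i ∈ C.D j \ Gset C.prec (C.D j))
    (hDl : ∀ i, Dl i = shiftPos C.prec (C.D j) (zl i))
    (lamD : Fin (b + 1) → ℝ)
    (hlamD : ∀ i, ∃ l : ℕ, (l : ℕ∞) < C.q ∧ C.D l = Dl i ∧ C.lam l = lamD i) :
    -- (a)
    (∀ i, TIPat C.prec (C.D j) (zl i) →
        Lset C.prec (Dl i) = Lset C.prec (C.D j) ∧ lamD i = C.lam j) ∧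
    -- (b)
    (latticeRank (Lset C.prec (C.D j)) = k → ∀ i, TIPat C.prec (C.D j) (zl i)) ∧
    -- (c)
    ((∃ c : ℕ, C.D j ⊆ Kc k c) → ∀ i, ¬ TIPat C.prec (C.D j) (zl i)) ∧
    -- (d)
    (∀ i, TIPat C.prec (C.D j) (zl i) → Dhat C.prec (Dl i) = Dhat C.prec (C.D j)) ∧
    -- (e)
    (∀ s ∈ Lset C.prec (C.D j),
        tr (Dhat C.prec (C.D j) ∪ {0} ∪ (-(Dhat C.prec (C.D j)))) s =
          Dhat C.prec (C.D j) ∪ {0} ∪ (-(Dhat C.prec (C.D j)))) := by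
  have hA := C.D_subset j hj
  have hz : ∀ i, zl i ∈ insert 0 (C.D j) := fun i => by
    rcases eq_or_ne i 0 with rfl | hi
    exacts [Or.inl hz0, Or.inr (hzl i hi).1]
  refine ⟨fun i ht => ⟨?_, ?_⟩, fun hrank i => TIPat_of_latticeRank_eq C.ord hA hk hrank (hz i),
    fun ⟨c, hc⟩ i ht => ?_, fun i ht => ?_, fun s hs => ?_⟩
  · rw [Lset, Lset, hDl, Gset_shiftPos_eq_of_TIPat C hj (hz i) ht]
  · obtain ⟨l, hl, hDl', hlam⟩ := hlamD i
    rw [← hlam]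
    exact lam_eq_of_TIPat C hj hl (hz i) ht (hDl'.trans (hDl i))
  · obtain ⟨y, hy, hpos⟩ := ht.exists_pos_mem_Gset C.ord
    exact C.ord.ne_zero_of_pos hpos (eq_zero_of_mem_Gset_of_subset_Kc C.ord hA hc hy)
  · rw [hDl, Dhat_shiftPos_eq_of_TIPat C hj (hz i) ht]
  · exact tr_eq_self_of_add_mem (fun _ => neg_mem_Lset)
      (fun a ha s hs => add_mem_Dhat_symm C.ord hA ha hs) hs

/-- consequences of the Translation Invariance Property `TIP_j`.
The family `D_{l_0},…,D_{l_{b_j}}` (with `l_0 = j`, `z_{l_0} = 0`) is given as data;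
index `i` satisfies `(TIP_j)` iff `TIPat prec (D j) (zl i)` holds. -/
theorem stmt3 (k : ℕ) (hk : 1 ≤ k) (C : CondD k) (j : ℕ) (hj : (j : ℕ∞) < C.q)
    (b : ℕ) (Dl : Fin (b + 1) → Set (V k)) (zl : Fin (b + 1) → V k)
    (hz0 : zl 0 = 0) (hD0 : Dl 0 = C.D j)
    (hzl : ∀ i, i ≠ 0 → zl i ∈ C.D j \ Gset C.prec (C.D j))
    (hDl : ∀ i, Dl i = shiftPos C.prec (C.D j) (zl i))
    (hinj : Function.Injective Dl)
    (hsurj : ∀ z ∈ C.D j \ Gset C.prec (C.D j), ∃ i, i ≠ 0 ∧ shiftPos C.prec (C.D j) z = Dl i)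
    (lamD : Fin (b + 1) → ℝ)
    (hlamD : ∀ i, ∃ l : ℕ, (l : ℕ∞) < C.q ∧ C.D l = Dl i ∧ C.lam l = lamD i) :
    -- (a)
    (∀ i, TIPat C.prec (C.D j) (zl i) →
        Lset C.prec (Dl i) = Lset C.prec (C.D j) ∧ lamD i = C.lam j) ∧
    -- (b)
    (latticeRank (Lset C.prec (C.D j)) = k → ∀ i, TIPat C.prec (C.D j) (zl i)) ∧
    -- (c)
    ((∃ c : ℕ, C.D j ⊆ Kc k c) → ∀ i, ¬ TIPat C.prec (C.D j) (zl i)) ∧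
    -- (d)
    (∀ i, TIPat C.prec (C.D j) (zl i) → Dhat C.prec (Dl i) = Dhat C.prec (C.D j)) ∧
    -- (e)
    (∀ s ∈ Lset C.prec (C.D j),
        tr (Dhat C.prec (C.D j) ∪ {0} ∪ (-(Dhat C.prec (C.D j)))) s =
          Dhat C.prec (C.D j) ∪ {0} ∪ (-(Dhat C.prec (C.D j)))) :=
  stmt3_general k hk C j hj b Dl zl hz0 hzl hDl lamD hlamD

end Paper
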